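/- arXiv:2007.07726 — 2 statements merged into one kernel-verified Lean document; each statement's English description precedes it below -/
import Mathlib

section
/- Let σ > 0, let X be a random variable with the centered Gaussian law N(0,σ²), and let l : ℝ² → ℝ be continuously differentiable with bounded partial derivatives. Then the function f_l(x₁, x₂) := −σ⁻² ∫₀¹ (2√(t(1−t)))⁻¹ · E[X · l(√t x₁ + √(1−t) X, x₂)] dt admits the representation f_l(x₁, x₂) = −∫₀¹ (2√t)⁻¹ · E[∂₁l(√t · x₁ + √(1−t) · X, x₂)] dt for all (x₁, x₂) ∈ ℝ². -/
/-
For fixed `t ∈ (0,1)`, the map `g y = l(√t x₁ + √(1-t) y, x₂)` has the bounded derivative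
`√(1-t) ∂₁l(√t x₁ + √(1-t) y, x₂)`, so Stein's lemma `E[X g(X)] = σ² E[g'(X)]` turns the inner
expectation of `f_l` into `σ² √(1-t) E[∂₁l(…)]`, and `√(1-t) / √(t(1-t)) = 1/√t`. Stein's lemma is
integration by parts against the Gaussian density `φ`, whose derivative is `-(x-μ)/v · φ`; since `g`
grows at most linearly and Gaussians have second moments, all integrands are integrable and the
boundary terms vanish.
-/

open MeasureTheory ProbabilityTheory

/-- Partial derivative of `f : ℝ × ℝ → ℝ` in its first variable. -/
noncomputable def pderiv1 (f : ℝ × ℝ → ℝ) (p : ℝ × ℝ) : ℝ :=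
  deriv (fun y => f (y, p.2)) p.1

/-- Partial derivative of `f : ℝ × ℝ → ℝ` in its second variable. -/
noncomputable def pderiv2 (f : ℝ × ℝ → ℝ) (p : ℝ × ℝ) : ℝ :=
  deriv (fun y => f (p.1, y)) p.2

/-- The Stein solution
`f_l(x₁,x₂) = −σ⁻² ∫₀¹ (2√(t(1−t)))⁻¹ E[X l(√t x₁ + √(1−t) X, x₂)] dt`. -/
noncomputable def steinSol {Ω : Type*} [MeasurableSpace Ω] (P : Measure Ω)
    (X : Ω → ℝ) (σ : ℝ) (l : ℝ × ℝ → ℝ) : ℝ × ℝ → ℝ :=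
  fun p => -(σ ^ 2)⁻¹ *
    ∫ t in (0:ℝ)..1, (2 * Real.sqrt (t * (1 - t)))⁻¹ *
      ∫ ω, X ω * l (Real.sqrt t * p.1 + Real.sqrt (1 - t) * X ω, p.2) ∂P

open scoped NNReal

lemma hasDerivAt_gaussianPDFReal (μ : ℝ) (v : ℝ≥0) (x : ℝ) :
    HasDerivAt (gaussianPDFReal μ v) (-((x - μ) / v) * gaussianPDFReal μ v x) x := by
  have hexp : HasDerivAt (fun x => -(x - μ) ^ 2 / (2 * v)) (-(2 * (x - μ) ^ 1 * 1) / (2 * v)) x :=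
    (((hasDerivAt_id x).sub_const μ).pow 2).neg.div_const _
  refine (hexp.exp.const_mul (Real.sqrt (2 * Real.pi * v))⁻¹).congr_deriv ?_
  rw [gaussianPDFReal]
  ring

lemma integrable_gaussianReal_iff {μ : ℝ} {v : ℝ≥0} (hv : v ≠ 0) {f : ℝ → ℝ} :
    Integrable f (gaussianReal μ v) ↔ Integrable (fun x => gaussianPDFReal μ v x * f x) := by
  rw [gaussianReal_of_var_ne_zero _ hv, integrable_withDensity_iff_integrable_smul'
    (measurable_gaussianPDF _ _) (ae_of_all _ fun _ => gaussianPDF_lt_top)]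
  simp

lemma abs_apply_le_of_abs_deriv_le {g g' : ℝ → ℝ} (hg : ∀ x, HasDerivAt g (g' x) x) {C : ℝ}
    (hC : ∀ x, |g' x| ≤ C) (x : ℝ) : |g x| ≤ |g 0| + C * |x| := by
  have hlip : ‖g x - g 0‖ ≤ C * ‖x - 0‖ :=
    convex_univ.norm_image_sub_le_of_norm_hasDerivWithin_le
      (fun y _ => (hg y).hasDerivWithinAt) (fun y _ => hC y) trivial trivial
  rw [Real.norm_eq_abs, Real.norm_eq_abs, sub_zero] at hlip
  linarith [abs_sub_abs_le_abs_sub (g x) (g 0)]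

lemma memLp_of_abs_deriv_le {μ : Measure ℝ} [IsFiniteMeasure μ] {p : ENNReal}
    (hid : MemLp id p μ) {g g' : ℝ → ℝ} (hg : ∀ x, HasDerivAt g (g' x) x) {C : ℝ}
    (hC : ∀ x, |g' x| ≤ C) : MemLp g p μ := by
  have hcont : Continuous g := continuous_iff_continuousAt.2 fun x => (hg x).continuousAt
  refine ((memLp_const |g 0|).add (hid.norm.const_mul C)).mono hcont.aestronglyMeasurable ?_
  refine ae_of_all _ fun x => ?_
  simp only [Pi.add_apply, id, Real.norm_eq_abs]
  exact (abs_apply_le_of_abs_deriv_le hg hC x).trans (le_abs_self _)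

lemma measurable_of_hasDerivAt {g g' : ℝ → ℝ} (hg : ∀ x, HasDerivAt g (g' x) x) :
    Measurable g' := by
  simpa only [funext fun x => (hg x).deriv] using measurable_deriv g

theorem integral_sub_mul_gaussianReal {μ : ℝ} {v : ℝ≥0} (hv : v ≠ 0) {g g' : ℝ → ℝ}
    (hg : ∀ x, HasDerivAt g (g' x) x) {C : ℝ} (hC : ∀ x, |g' x| ≤ C) :
    ∫ x, (x - μ) * g x ∂gaussianReal μ v = v * ∫ x, g' x ∂gaussianReal μ v := by
  set φ := gaussianPDFReal μ v
  have hid2 : MemLp id 2 (gaussianReal μ v) := memLp_id_gaussianReal' 2 ENNReal.ofNat_ne_top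
  have hg2 : MemLp g 2 (gaussianReal μ v) := memLp_of_abs_deriv_le hid2 hg hC
  have hint_g : Integrable (fun x => φ x * g x) :=
    (integrable_gaussianReal_iff hv).1 (hg2.integrable one_le_two)
  have hint_g' : Integrable (fun x => φ x * g' x) :=
    (integrable_gaussianReal_iff hv).1 <| (integrable_const C).mono'
      (measurable_of_hasDerivAt hg).aestronglyMeasurable (ae_of_all _ hC)
  have hint_xg : Integrable (fun x => φ x * ((x - μ) * g x)) :=
    (integrable_gaussianReal_iff hv).1 <|
      (hid2.sub (memLp_const μ)).integrable_mul hg2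
  have hibp := integral_mul_deriv_eq_deriv_mul_of_integrable (u := g) (v := φ)
    (v' := fun x => -((x - μ) / v) * φ x) (fun x _ => hg x)
    (fun x _ => hasDerivAt_gaussianPDFReal μ v x)
    (by convert hint_xg.const_mul (-(v : ℝ)⁻¹) using 1; ext x; simp only [Pi.mul_apply]; ring)
    (hint_g'.congr (ae_of_all _ fun _ => mul_comm _ _))
    (hint_g.congr (ae_of_all _ fun _ => mul_comm _ _))
  have hv' : (v : ℝ) ≠ 0 := by exact_mod_cast hv
  simp only [integral_gaussianReal_eq_integral_smul hv, smul_eq_mul]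
  calc ∫ x, φ x * ((x - μ) * g x)
      = -v * ∫ x, g x * (-((x - μ) / v) * φ x) := by
        rw [← integral_const_mul]; congr 1; ext x; field_simp
    _ = v * ∫ x, φ x * g' x := by
        rw [hibp, neg_mul_neg]; simp only [mul_comm (g' _)]

theorem integral_sub_mul_comp_of_map_eq_gaussianReal {Ω : Type*} [MeasurableSpace Ω]
    {P : Measure Ω} {X : Ω → ℝ} (hX : AEMeasurable X P) {μ : ℝ} {v : ℝ≥0}
    (hlaw : P.map X = gaussianReal μ v) (hv : v ≠ 0) {g g' : ℝ → ℝ}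
    (hg : ∀ x, HasDerivAt g (g' x) x) {C : ℝ} (hC : ∀ x, |g' x| ≤ C) :
    ∫ ω, (X ω - μ) * g (X ω) ∂P = v * ∫ ω, g' (X ω) ∂P := by
  have hcont : Continuous g := continuous_iff_continuousAt.2 fun x => (hg x).continuousAt
  rw [← integral_map (f := fun x => (x - μ) * g x) hX (by fun_prop),
    ← integral_map hX (measurable_of_hasDerivAt hg).aestronglyMeasurable, hlaw]
  exact integral_sub_mul_gaussianReal hv hg hC

lemma hasDerivAt_pderiv1 {l : ℝ × ℝ → ℝ} {p : ℝ × ℝ} (hl : DifferentiableAt ℝ l p) :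
    HasDerivAt (fun y => l (y, p.2)) (pderiv1 l p) p.1 :=
  (hl.comp p.1 (differentiableAt_id.prodMk (differentiableAt_const _))).hasDerivAt

lemma integral_mul_slice_eq_var_mul_integral_pderiv1 {Ω : Type*} [MeasurableSpace Ω]
    {P : Measure Ω} {X : Ω → ℝ} (hX : AEMeasurable X P) {v : ℝ≥0}
    (hlaw : P.map X = gaussianReal 0 v) (hv : v ≠ 0) {l : ℝ × ℝ → ℝ}
    (hl : Differentiable ℝ l) {C : ℝ} (hC : ∀ p, |pderiv1 l p| ≤ C) (a s x₂ : ℝ) :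
    ∫ ω, X ω * l (a + s * X ω, x₂) ∂P = v * (s * ∫ ω, pderiv1 l (a + s * X ω, x₂) ∂P) := by
  have hslice (y : ℝ) :
      HasDerivAt (fun y => l (a + s * y, x₂)) (s * pderiv1 l (a + s * y, x₂)) y := by
    have := (hasDerivAt_pderiv1 (hl (a + s * y, x₂))).comp y
      (((hasDerivAt_id y).const_mul s).const_add a)
    simpa [Function.comp_def, mul_comm] using this
  have hbound (y : ℝ) : |s * pderiv1 l (a + s * y, x₂)| ≤ |s| * C := by
    rw [abs_mul]; exact mul_le_mul_of_nonneg_left (hC _) (abs_nonneg s)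
  simpa [integral_const_mul] using
    integral_sub_mul_comp_of_map_eq_gaussianReal hX hlaw hv hslice hbound

theorem steinSol_repStein1_general
    {Ω : Type*} [MeasurableSpace Ω] (P : Measure Ω)
    (σ : ℝ) (hσ : 0 < σ) (X : Ω → ℝ) (hX : Measurable X)
    (hlaw : Measure.map X P = gaussianReal 0 (Real.toNNReal (σ ^ 2)))
    (l : ℝ × ℝ → ℝ) (hl : ContDiff ℝ 1 l)
    (hb1 : ∃ C, ∀ p, |pderiv1 l p| ≤ C) :
    ∀ x₁ x₂ : ℝ,
      steinSol P X σ l (x₁, x₂) =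
        -∫ t in (0:ℝ)..1, (2 * Real.sqrt t)⁻¹ *
          ∫ ω, pderiv1 l (Real.sqrt t * x₁ + Real.sqrt (1 - t) * X ω, x₂) ∂P := by
  intro x₁ x₂
  obtain ⟨C, hC⟩ := hb1
  have hσ2 : 0 < σ ^ 2 := by positivity
  have hv : (σ ^ 2).toNNReal ≠ 0 := (Real.toNNReal_pos.2 hσ2).ne'
  rw [steinSol, neg_mul, ← intervalIntegral.integral_const_mul, neg_inj]
  refine intervalIntegral.integral_congr_Ioo_of_le zero_le_one fun t ht => ?_
  have hst : 0 < Real.sqrt t := Real.sqrt_pos.2 ht.1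
  have hs1t : 0 < Real.sqrt (1 - t) := Real.sqrt_pos.2 (sub_pos.2 ht.2)
  rw [integral_mul_slice_eq_var_mul_integral_pderiv1 hX.aemeasurable hlaw hv
    (hl.differentiable one_ne_zero) hC, Real.coe_toNNReal _ hσ2.le, Real.sqrt_mul ht.1.le]
  field_simp

/-- **Representation (repStein1) of the Stein solution**: for `X ~ N(0,σ²)` and `l`
continuously differentiable with bounded partial derivatives,
`f_l(x₁,x₂) = −∫₀¹ (2√t)⁻¹ E[∂₁l(√t x₁ + √(1−t) X, x₂)] dt`. -/
theorem steinSol_repStein1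
    {Ω : Type*} [MeasurableSpace Ω] (P : Measure Ω) [IsProbabilityMeasure P]
    (σ : ℝ) (hσ : 0 < σ) (X : Ω → ℝ) (hX : Measurable X)
    (hlaw : Measure.map X P = gaussianReal 0 (Real.toNNReal (σ ^ 2)))
    (l : ℝ × ℝ → ℝ) (hl : ContDiff ℝ 1 l)
    (hb1 : ∃ C, ∀ p, |pderiv1 l p| ≤ C) (hb2 : ∃ C, ∀ p, |pderiv2 l p| ≤ C) :
    ∀ x₁ x₂ : ℝ,
      steinSol P X σ l (x₁, x₂) =
        -∫ t in (0:ℝ)..1, (2 * Real.sqrt t)⁻¹ *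
          ∫ ω, pderiv1 l (Real.sqrt t * x₁ + Real.sqrt (1 - t) * X ω, x₂) ∂P :=
  steinSol_repStein1_general P σ hσ X hX hlaw l hl hb1
end

section
/- Let σ > 0, let X be a random variable with the centered Gaussian law N(0,σ²), and let l : ℝ² → ℝ be continuously differentiable with bounded partial derivatives. Then the function f_l(x₁, x₂) := −σ⁻² ∫₀¹ (2√(t(1−t)))⁻¹ · E[X · l(√t x₁ + √(1−t) X, x₂)] dt is differentiable in its second variable and satisfies sup_{(x₁,x₂)∈ℝ²} |∂₂f_l(x₁, x₂)| ≤ σ⁻¹ · √(π/2) · sup_{(x₁,x₂)∈ℝ²} |∂₂l(x₁, x₂)|. -/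
/-!
Differentiating under both integrals, with dominating functions `|X| · sup |∂₂l|` inside and a
constant multiple of the arcsine density `(2√(t(1−t)))⁻¹` outside, gives
`∂₂f_l(x₁, x₂) = −σ⁻² ∫₀¹ (2√(t(1−t)))⁻¹ E[X ∂₂l(√t x₁ + √(1−t) X, x₂)] dt`.
Hence `|∂₂f_l| ≤ σ⁻² · (π/2) · E|X| · sup |∂₂l|`, and `E|X| = σ√(2/π)` for `X ~ N(0,σ²)`.
Integrability of `X · l(√t x₁ + √(1−t) X, x₂)`, uniformly in `t ∈ [0,1]`, comes from the linear
growth of `l` in its first variable and `E[X²] < ∞`.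
-/

open MeasureTheory ProbabilityTheory

open Real Set
open scoped NNReal

section WeightedIntegral

variable {α : Type*} [MeasurableSpace α] {μ : Measure α} {w : α → ℝ}

theorem abs_integral_mul_le_of_abs_le {φ : α → ℝ} {C : ℝ} (hw : Integrable w μ)
    (hφ : ∀ᵐ x ∂μ, |φ x| ≤ C) : |∫ x, w x * φ x ∂μ| ≤ C * (∫ x, |w x| ∂μ) := by
  rw [← Real.norm_eq_abs, ← integral_const_mul]
  refine norm_integral_le_of_norm_le (hw.abs.const_mul C) (hφ.mono fun x hx => ?_)
  rw [norm_mul, mul_comm]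
  exact mul_le_mul_of_nonneg_right hx (abs_nonneg _)

theorem hasDerivAt_integral_mul_of_abs_deriv_le {φ φ' : ℝ → α → ℝ} {C y₀ : ℝ}
    (hw : Integrable w μ) (hφ : ∀ y, AEStronglyMeasurable (φ y) μ)
    (hφ' : AEStronglyMeasurable (φ' y₀) μ) (hint : Integrable (fun x => w x * φ y₀ x) μ)
    (hderiv : ∀ᵐ x ∂μ, ∀ y, HasDerivAt (φ · x) (φ' y x) y)
    (hbound : ∀ᵐ x ∂μ, ∀ y, |φ' y x| ≤ C) :
    HasDerivAt (fun y => ∫ x, w x * φ y x ∂μ) (∫ x, w x * φ' y₀ x ∂μ) y₀ :=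
  (hasDerivAt_integral_of_dominated_loc_of_deriv_le (bound := fun x => |w x| * C)
    Filter.univ_mem (.of_forall fun y => hw.1.mul (hφ y)) hint (hw.1.mul hφ')
    (hbound.mono fun x hx y _ => by
      rw [norm_mul]
      exact mul_le_mul_of_nonneg_left (hx y) (abs_nonneg _))
    (hw.abs.mul_const C)
    (hderiv.mono fun x hx y _ => (hx y).const_mul (w x))).2

end WeightedIntegral

section PartialDerivatives

variable {l : ℝ × ℝ → ℝ}

theorem measurable_pderiv2 (hl : Continuous l) : Measurable (pderiv2 l) :=
  measurable_deriv_with_param (f := fun x y => l (x, y)) hl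

theorem hasDerivAt_pderiv2 (hl : Differentiable ℝ l) (x y : ℝ) :
    HasDerivAt (fun y => l (x, y)) (pderiv2 l (x, y)) y :=
  (hl.comp (by fun_prop : Differentiable ℝ fun y : ℝ => (x, y))).differentiableAt.hasDerivAt

theorem abs_le_of_abs_pderiv1_le (hl : Differentiable ℝ l) {C : ℝ}
    (hC : ∀ p, |pderiv1 l p| ≤ C) (x y : ℝ) : |l (x, y)| ≤ |l (0, y)| + C * |x| := by
  have hdiff : Differentiable ℝ fun x => l (x, y) := hl.comp (by fun_prop)
  have := convex_univ.norm_image_sub_le_of_norm_deriv_le (fun s _ => hdiff s)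
    (fun s _ => hC (s, y)) (mem_univ 0) (mem_univ x)
  simp only [Real.norm_eq_abs, sub_zero] at this
  linarith [abs_sub_abs_le_abs_sub (l (x, y)) (l (0, y))]

end PartialDerivatives

theorem hasDerivAt_arcsin_two_mul_sub_one_div_two {t : ℝ} (ht : t ∈ Ioo (0 : ℝ) 1) :
    HasDerivAt (fun s => arcsin (2 * s - 1) / 2) (2 * √(t * (1 - t)))⁻¹ t := by
  have hlo : 2 * t - 1 ≠ -1 := by linarith [ht.1]
  have hhi : 2 * t - 1 ≠ 1 := by linarith [ht.2]
  have hsqrt : √(1 - (2 * t - 1) ^ 2) = 2 * √(t * (1 - t)) := by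
    rw [show 1 - (2 * t - 1) ^ 2 = 2 ^ 2 * (t * (1 - t)) by ring, sqrt_mul (by positivity),
      sqrt_sq zero_le_two]
  refine (((hasDerivAt_arcsin hlo hhi).comp t
    (((hasDerivAt_id t).const_mul 2).sub_const 1)).div_const 2).congr_deriv ?_
  rw [hsqrt]
  field_simp

theorem continuous_arcsin_two_mul_sub_one_div_two :
    Continuous fun s : ℝ => arcsin (2 * s - 1) / 2 := by
  fun_prop

theorem integrableOn_inv_two_mul_sqrt_mul_one_sub :
    IntegrableOn (fun t : ℝ => (2 * √(t * (1 - t)))⁻¹) (Ioc 0 1) :=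
  intervalIntegral.integrableOn_deriv_of_nonneg
    continuous_arcsin_two_mul_sub_one_div_two.continuousOn
    (fun _ ht => hasDerivAt_arcsin_two_mul_sub_one_div_two ht) (fun _ _ => by positivity)

theorem intervalIntegrable_inv_two_mul_sqrt_mul_one_sub :
    IntervalIntegrable (fun t : ℝ => (2 * √(t * (1 - t)))⁻¹) volume 0 1 :=
  (intervalIntegrable_iff_integrableOn_Ioc_of_le zero_le_one).2
    integrableOn_inv_two_mul_sqrt_mul_one_sub

theorem integral_inv_two_mul_sqrt_mul_one_sub :
    ∫ t in (0 : ℝ)..1, (2 * √(t * (1 - t)))⁻¹ = π / 2 := by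
  rw [intervalIntegral.integral_eq_sub_of_hasDerivAt_of_le zero_le_one
    continuous_arcsin_two_mul_sub_one_div_two.continuousOn
    (fun _ ht => hasDerivAt_arcsin_two_mul_sub_one_div_two ht)
    intervalIntegrable_inv_two_mul_sqrt_mul_one_sub]
  norm_num
  ring

theorem integral_Ioi_mul_exp_neg_mul_sq {b : ℝ} (hb : 0 < b) :
    ∫ x in Ioi (0 : ℝ), x * exp (-b * x ^ 2) = (2 * b)⁻¹ := by
  have := integral_mul_cexp_neg_mul_sq (b := b) (by simpa using hb)
  rw [← Complex.ofReal_inj, ← integral_complex_ofReal]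
  push_cast
  exact this

theorem integral_abs_mul_exp_neg_mul_sq {b : ℝ} (hb : 0 < b) :
    ∫ x, |x| * exp (-b * x ^ 2) = b⁻¹ := by
  have := integral_comp_abs (f := fun x => x * exp (-b * x ^ 2))
  simp only [sq_abs] at this
  rw [this, integral_Ioi_mul_exp_neg_mul_sq hb]
  field_simp

theorem integral_abs_gaussianReal {v : ℝ≥0} (hv : v ≠ 0) :
    ∫ x, |x| ∂gaussianReal 0 v = √(2 * v / π) := by
  rw [integral_gaussianReal_eq_integral_smul hv]
  have hexp : ∀ x : ℝ, gaussianPDFReal 0 v x • |x|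
      = (√(2 * π * v))⁻¹ * (|x| * exp (-(2 * (v : ℝ))⁻¹ * x ^ 2)) := fun x => by
    simp only [gaussianPDFReal, sub_zero, smul_eq_mul]
    ring_nf
  have hsqrt : √(2 * v / π) * √(2 * π * v) = 2 * v := by
    rw [← sqrt_mul (by positivity), show 2 * v / π * (2 * π * v) = (2 * (v : ℝ)) ^ 2 by
      field_simp, sqrt_sq (by positivity)]
  simp_rw [hexp, integral_const_mul]
  rw [integral_abs_mul_exp_neg_mul_sq (by positivity), inv_inv, inv_mul_eq_div,
    div_eq_iff (by positivity), hsqrt]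

section SteinSolution

variable {Ω : Type*} [MeasurableSpace Ω] {P : Measure Ω} {X : Ω → ℝ} {l : ℝ × ℝ → ℝ}
  {C₁ C₂ : ℝ}

noncomputable def interpMoment (P : Measure Ω) (X : Ω → ℝ) (f : ℝ × ℝ → ℝ) (x₁ y t : ℝ) : ℝ :=
  ∫ ω, X ω * f (√t * x₁ + √(1 - t) * X ω, y) ∂P

theorem steinSol_apply (σ x₁ y : ℝ) :
    steinSol P X σ l (x₁, y)
      = -(σ ^ 2)⁻¹ * ∫ t in (0 : ℝ)..1, (2 * √(t * (1 - t)))⁻¹ * interpMoment P X l x₁ y t :=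
  rfl

theorem abs_sqrt_mul_add_sqrt_one_sub_mul_le {t : ℝ} (ht : t ∈ Icc (0 : ℝ) 1) (a b : ℝ) :
    |√t * a + √(1 - t) * b| ≤ |a| + |b| := by
  have h₁ : √t ≤ 1 := sqrt_le_one.2 ht.2
  have h₂ : √(1 - t) ≤ 1 := sqrt_le_one.2 (by linarith [ht.1])
  calc |√t * a + √(1 - t) * b| ≤ √t * |a| + √(1 - t) * |b| := by
        simpa only [abs_mul, abs_of_nonneg (sqrt_nonneg _)] using
          abs_add_le (√t * a) (√(1 - t) * b)
    _ ≤ |a| + |b| := by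
        gcongr
        · exact mul_le_of_le_one_left (abs_nonneg a) h₁
        · exact mul_le_of_le_one_left (abs_nonneg b) h₂

theorem abs_mul_apply_interp_le (hl : Differentiable ℝ l) (hC₁ : ∀ p, |pderiv1 l p| ≤ C₁)
    {t : ℝ} (ht : t ∈ Icc (0 : ℝ) 1) (x₁ x y : ℝ) :
    |x * l (√t * x₁ + √(1 - t) * x, y)| ≤ (|l (0, y)| + C₁ * |x₁|) * |x| + C₁ * x ^ 2 := by
  have hC₁0 : 0 ≤ C₁ := (abs_nonneg _).trans (hC₁ 0)
  calc |x * l (√t * x₁ + √(1 - t) * x, y)|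
      ≤ |x| * (|l (0, y)| + C₁ * (|x₁| + |x|)) := by
        rw [abs_mul]
        gcongr
        refine (abs_le_of_abs_pderiv1_le hl hC₁ _ y).trans ?_
        gcongr
        exact abs_sqrt_mul_add_sqrt_one_sub_mul_le ht x₁ x
    _ = (|l (0, y)| + C₁ * |x₁|) * |x| + C₁ * x ^ 2 := by rw [← sq_abs x]; ring

variable [IsFiniteMeasure P]

theorem integrable_mul_abs_add_mul_sq (hX2 : MemLp X 2 P) (a b : ℝ) :
    Integrable (fun ω => a * |X ω| + b * X ω ^ 2) P :=
  ((hX2.integrable one_le_two).abs.const_mul a).add (hX2.integrable_sq.const_mul b)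

theorem integrable_mul_apply_interp (hX : Measurable X) (hX2 : MemLp X 2 P) (hl : ContDiff ℝ 1 l)
    (hC₁ : ∀ p, |pderiv1 l p| ≤ C₁) {t : ℝ} (ht : t ∈ Icc (0 : ℝ) 1) (x₁ y : ℝ) :
    Integrable (fun ω => X ω * l (√t * x₁ + √(1 - t) * X ω, y)) P :=
  (integrable_mul_abs_add_mul_sq hX2 _ _).mono' (by fun_prop)
    (.of_forall fun ω =>
      abs_mul_apply_interp_le (hl.differentiable one_ne_zero) hC₁ ht x₁ (X ω) y)


theorem abs_interpMoment_le (hX2 : MemLp X 2 P) (hl : Differentiable ℝ l)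
    (hC₁ : ∀ p, |pderiv1 l p| ≤ C₁) {t : ℝ} (ht : t ∈ Icc (0 : ℝ) 1) (x₁ y : ℝ) :
    |interpMoment P X l x₁ y t|
      ≤ ∫ ω, (|l (0, y)| + C₁ * |x₁|) * |X ω| + C₁ * X ω ^ 2 ∂P := by
  rw [← Real.norm_eq_abs]
  exact norm_integral_le_of_norm_le (integrable_mul_abs_add_mul_sq hX2 _ _)
    (.of_forall fun ω => abs_mul_apply_interp_le hl hC₁ ht x₁ (X ω) y)

theorem stronglyMeasurable_interpMoment (hX : Measurable X) {f : ℝ × ℝ → ℝ} (hf : Measurable f)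
    (x₁ y : ℝ) : StronglyMeasurable (interpMoment P X f x₁ y) :=
  StronglyMeasurable.integral_prod_right' (f := fun q : ℝ × Ω =>
    X q.2 * f (√q.1 * x₁ + √(1 - q.1) * X q.2, y)) (by fun_prop)

theorem hasDerivAt_interpMoment (hX : Measurable X) (hX2 : MemLp X 2 P) (hl : ContDiff ℝ 1 l)
    (hC₁ : ∀ p, |pderiv1 l p| ≤ C₁) (hC₂ : ∀ p, |pderiv2 l p| ≤ C₂)
    {t : ℝ} (ht : t ∈ Icc (0 : ℝ) 1) (x₁ y₀ : ℝ) :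
    HasDerivAt (interpMoment P X l x₁ · t) (interpMoment P X (pderiv2 l) x₁ y₀ t) y₀ :=
  hasDerivAt_integral_mul_of_abs_deriv_le (hX2.integrable one_le_two) (fun y => by fun_prop)
    ((measurable_pderiv2 hl.continuous).comp (by fun_prop)).aestronglyMeasurable
    (integrable_mul_apply_interp hX hX2 hl hC₁ ht x₁ y₀)
    (.of_forall fun ω y => hasDerivAt_pderiv2 (hl.differentiable one_ne_zero) _ y)
    (.of_forall fun ω y => hC₂ _)

theorem integrableOn_mul_interpMoment (hX : Measurable X) (hX2 : MemLp X 2 P)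
    (hl : ContDiff ℝ 1 l) (hC₁ : ∀ p, |pderiv1 l p| ≤ C₁) (x₁ y : ℝ) :
    IntegrableOn (fun t => (2 * √(t * (1 - t)))⁻¹ * interpMoment P X l x₁ y t) (Ioc 0 1) := by
  have hg := integrableOn_inv_two_mul_sqrt_mul_one_sub
  refine (hg.mul_const (∫ ω, (|l (0, y)| + C₁ * |x₁|) * |X ω| + C₁ * X ω ^ 2 ∂P)).mono'
    (hg.1.mul
      (stronglyMeasurable_interpMoment hX hl.continuous.measurable x₁ y).aestronglyMeasurable)
    (ae_restrict_of_forall_mem measurableSet_Ioc fun t ht => ?_)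
  rw [norm_mul, Real.norm_of_nonneg (by positivity)]
  exact mul_le_mul_of_nonneg_left
    (abs_interpMoment_le hX2 (hl.differentiable one_ne_zero) hC₁ (Ioc_subset_Icc_self ht) x₁ y)
    (by positivity)

theorem hasDerivAt_steinSol (hX : Measurable X) (hX2 : MemLp X 2 P) (hl : ContDiff ℝ 1 l)
    (hC₁ : ∀ p, |pderiv1 l p| ≤ C₁) (hC₂ : ∀ p, |pderiv2 l p| ≤ C₂) (σ x₁ y₀ : ℝ) :
    HasDerivAt (fun y => steinSol P X σ l (x₁, y)) (-(σ ^ 2)⁻¹ *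
      ∫ t in (0 : ℝ)..1, (2 * √(t * (1 - t)))⁻¹ * interpMoment P X (pderiv2 l) x₁ y₀ t) y₀ := by
  have hmeas {f : ℝ × ℝ → ℝ} (hf : Measurable f) (y : ℝ) :
      AEStronglyMeasurable (interpMoment P X f x₁ y) (volume.restrict (Ioc 0 1)) :=
    (stronglyMeasurable_interpMoment hX hf x₁ y).aestronglyMeasurable
  simp only [steinSol_apply, intervalIntegral.integral_of_le zero_le_one]
  exact .const_mul _ (hasDerivAt_integral_mul_of_abs_deriv_le (C := C₂ * ∫ ω, |X ω| ∂P)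
    integrableOn_inv_two_mul_sqrt_mul_one_sub (hmeas hl.continuous.measurable)
    (hmeas (measurable_pderiv2 hl.continuous) y₀)
    (integrableOn_mul_interpMoment hX hX2 hl hC₁ x₁ y₀)
    (ae_restrict_of_forall_mem measurableSet_Ioc fun t ht y =>
      hasDerivAt_interpMoment hX hX2 hl hC₁ hC₂ (Ioc_subset_Icc_self ht) x₁ y)
    (.of_forall fun t y => abs_integral_mul_le_of_abs_le (hX2.integrable one_le_two)
      (.of_forall fun ω => hC₂ _)))

theorem abs_pderiv2_steinSol_le (hX : Measurable X) (hX2 : MemLp X 2 P) (hl : ContDiff ℝ 1 l)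
    (hC₁ : ∀ p, |pderiv1 l p| ≤ C₁) {C : ℝ} (hC : ∀ p, |pderiv2 l p| ≤ C) (σ : ℝ) (p : ℝ × ℝ) :
    |pderiv2 (steinSol P X σ l) p| ≤ (σ ^ 2)⁻¹ * (π / 2 * (C * ∫ ω, |X ω| ∂P)) := by
  rw [pderiv2, (hasDerivAt_steinSol hX hX2 hl hC₁ hC σ p.1 p.2).deriv, abs_mul, abs_neg, abs_inv,
    abs_of_nonneg (sq_nonneg σ), ← integral_inv_two_mul_sqrt_mul_one_sub,
    ← intervalIntegral.integral_mul_const (C * ∫ ω, |X ω| ∂P)]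
  gcongr
  rw [← Real.norm_eq_abs]
  refine intervalIntegral.norm_integral_le_of_norm_le zero_le_one (.of_forall fun t _ => ?_)
    (intervalIntegrable_inv_two_mul_sqrt_mul_one_sub.mul_const _)
  rw [norm_mul, Real.norm_of_nonneg (by positivity)]
  exact mul_le_mul_of_nonneg_left (abs_integral_mul_le_of_abs_le (hX2.integrable one_le_two)
    (.of_forall fun ω => hC _)) (by positivity)

end SteinSolution

/-- **Third bound of Lemma `SolStein0`**: `f_l` is differentiable in its second
variable and `sup |∂₂ f_l| ≤ σ⁻¹ √(π/2) sup |∂₂ l|`. -/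
theorem steinSol_pderiv2_bound
    {Ω : Type*} [MeasurableSpace Ω] (P : Measure Ω) [IsProbabilityMeasure P]
    (σ : ℝ) (hσ : 0 < σ) (X : Ω → ℝ) (hX : Measurable X)
    (hlaw : Measure.map X P = gaussianReal 0 (Real.toNNReal (σ ^ 2)))
    (l : ℝ × ℝ → ℝ) (hl : ContDiff ℝ 1 l)
    (hb1 : ∃ C, ∀ p, |pderiv1 l p| ≤ C) (hb2 : ∃ C, ∀ p, |pderiv2 l p| ≤ C) :
    (∀ p : ℝ × ℝ, DifferentiableAt ℝ (fun y => steinSol P X σ l (p.1, y)) p.2) ∧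
    ∀ C : ℝ, (∀ p, |pderiv2 l p| ≤ C) →
      ∀ p, |pderiv2 (steinSol P X σ l) p| ≤ σ⁻¹ * Real.sqrt (Real.pi / 2) * C := by
  obtain ⟨C₁, hC₁⟩ := hb1
  obtain ⟨C₂, hC₂⟩ := hb2
  have hv : (σ ^ 2).toNNReal ≠ 0 := by simpa using hσ.ne'
  have hX2 : MemLp X 2 P := (memLp_map_measure_iff aestronglyMeasurable_id hX.aemeasurable).1
    (hlaw ▸ memLp_id_gaussianReal 2)
  have hmean : ∫ ω, |X ω| ∂P = σ * √(2 / π) := by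
    rw [← integral_map hX.aemeasurable continuous_abs.aestronglyMeasurable, hlaw,
      integral_abs_gaussianReal hv, Real.coe_toNNReal _ (sq_nonneg σ), mul_div_right_comm,
      sqrt_mul' _ (sq_nonneg σ), sqrt_sq hσ.le, mul_comm]
  refine ⟨fun p => (hasDerivAt_steinSol hX hX2 hl hC₁ hC₂ σ p.1 p.2).differentiableAt,
    fun C hC p => (abs_pderiv2_steinSol_le hX hX2 hl hC₁ hC σ p).trans_eq ?_⟩
  have hπ : √(2 / π) = (√(π / 2))⁻¹ := by rw [← sqrt_inv, inv_div]
  have hπ' : √(π / 2) ^ 2 = π / 2 := sq_sqrt (by positivity)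
  rw [hmean, hπ]
  field_simp
  rw [hπ']
  ring
end
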